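/- Let r ≥ 1 and n ≥ 1 be integers. In the ring of formal power series ℚ[[t]], let G be the series with constant coefficient 0 and [t^m]G = r/m if r does not divide m, and [t^m]G = 0 if r divides m. Then [t^n] exp(G) = C(n+r−1, r−1) − C(n−1, r−1), where exp(G) = Σ_{ℓ≥0} G^ℓ/ℓ! is obtained by substituting G into the exponential power series, and C(a, b) denotes the binomial coefficient (equal to 0 when a < b). -/

import Mathlib

/-!
Write `L = ∑_{m ≥ 1} tᵐ / m = -log(1 - t)`. Then `G = r·L(t) - L(tʳ)`, so `exp(G)` should be
`(1 - tʳ) / (1 - t)ʳ`. This is proved without logarithms: both series have constant term `1` and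
logarithmic derivative `G'` (chain rule for `exp ∘ G`, a direct computation for the rational
function), and a first-order linear ODE has unique power-series solutions. The coefficient of
`tⁿ` in `(1 - tʳ) / (1 - t)ʳ` is read off from `(1 - t)⁻ʳ = ∑ C(n + r - 1, r - 1) tⁿ`.
-/

open PowerSeries Finset

noncomputable def substInto {A : Type*} [CommRing A] (G f : PowerSeries A) : PowerSeries A :=
  PowerSeries.mk fun n =>
    ∑ k ∈ Finset.range (n + 1), PowerSeries.coeff (R := A) k f * PowerSeries.coeff (R := A) n (G ^ k)

namespace PowerSeries

section Substitution

variable {A : Type*} [CommRing A] {G : A⟦X⟧}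

theorem coeff_pow_eq_zero_of_lt (hG : constantCoeff G = 0) {n k : ℕ} (h : n < k) :
    coeff n (G ^ k) = 0 :=
  coeff_of_lt_order _ <|
    (ENat.natCast_lt_natCast.mpr h).trans_le (le_order_pow_of_constantCoeff_eq_zero k hG)

theorem substInto_eq_subst (hG : constantCoeff G = 0) (f : A⟦X⟧) :
    substInto G f = f.subst G := by
  ext n
  rw [coeff_subst' (.of_constantCoeff_zero' hG),
    finsum_eq_sum_of_support_subset _ (s := range (n + 1))]
  · simp [substInto, smul_eq_mul]
  · intro k hk
    by_contra hkn
    simp only [coe_range, Set.mem_Iio, not_lt] at hkn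
    simp [coeff_pow_eq_zero_of_lt hG (Nat.lt_of_succ_le hkn)] at hk

theorem constantCoeff_subst_of_constantCoeff_eq_zero (hG : constantCoeff G = 0) (f : A⟦X⟧) :
    constantCoeff (f.subst G) = constantCoeff f := by
  rw [← substInto_eq_subst hG, ← coeff_zero_eq_constantCoeff_apply,
    ← coeff_zero_eq_constantCoeff_apply, substInto, coeff_mk]
  simp

theorem derivative_exp_subst [Algebra ℚ A] (hG : HasSubst G) :
    d⁄dX A ((exp A).subst G) = (exp A).subst G * d⁄dX A G := by
  rw [derivative_subst hG, derivative_exp]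

end Substitution

theorem eq_of_derivative_eq_mul {K : Type*} [Field K] [CharZero K] {f g h : K⟦X⟧}
    (hf : d⁄dX K f = f * h) (hg : d⁄dX K g = g * h) (hg₀ : constantCoeff g ≠ 0)
    (hfg₀ : constantCoeff f = constantCoeff g) : f = g := by
  have hinv : g * g⁻¹ = 1 := PowerSeries.mul_inv_cancel g hg₀
  have hquot : f * g⁻¹ = 1 := by
    refine derivative.ext ?_ (by simp [hfg₀, hg₀])
    rw [Derivation.leibniz, derivative_inv', hf, hg, smul_eq_mul, smul_eq_mul, derivative_one]
    linear_combination (-f * h * g⁻¹) * hinv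
  rw [← mul_one f, ← hinv, mul_comm g, ← mul_assoc, hquot, one_mul]

theorem coeff_one_sub_X_pow_mul_mk_one_pow {R : Type*} [CommRing R] {r n : ℕ} (hr : r ≠ 0)
    (hn : n ≠ 0) :
    coeff n ((1 - X ^ r) * (PowerSeries.mk 1 : R⟦X⟧) ^ r) =
      ((n + r - 1).choose (r - 1) : R) - ((n - 1).choose (r - 1) : R) := by
  obtain ⟨s, rfl⟩ := Nat.exists_eq_add_one_of_ne_zero hr
  rw [mk_one_pow_eq_mk_choose_add, sub_mul, one_mul, map_sub, coeff_X_pow_mul', coeff_mk,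
    Nat.add_sub_cancel, ← add_assoc, Nat.add_sub_cancel, add_comm n]
  split_ifs with h
  · rw [coeff_mk, show s + (n - (s + 1)) = n - 1 by omega]
  · rw [Nat.choose_eq_zero_of_lt (by omega : n - 1 < s), Nat.cast_zero]

section Morris

variable (K : Type*) [Field K]

/-- `-log(1 - X) = ∑ Xᵐ / m`; the junk value `(0 : K)⁻¹ = 0` gives the constant term. -/
noncomputable def negLogOneSub : K⟦X⟧ := PowerSeries.mk fun m => (m : K)⁻¹

noncomputable def morrisSeries (r : ℕ) : K⟦X⟧ :=
  PowerSeries.mk fun m => if r ∣ m then 0 else (r : K) / m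

variable {K}

theorem constantCoeff_morrisSeries (r : ℕ) : constantCoeff (morrisSeries K r) = 0 := by
  simp [morrisSeries, ← coeff_zero_eq_constantCoeff_apply]

variable [CharZero K]

theorem derivative_negLogOneSub : d⁄dX K (negLogOneSub K) = PowerSeries.mk 1 := by
  ext n
  rw [coeff_derivative, negLogOneSub, coeff_mk, coeff_mk, Pi.one_apply, Nat.cast_add_one]
  exact inv_mul_cancel₀ (Nat.cast_add_one_ne_zero n)

theorem morrisSeries_eq_sub_expand {r : ℕ} (hr : r ≠ 0) :
    morrisSeries K r = (r : K⟦X⟧) * negLogOneSub K - expand r hr (negLogOneSub K) := by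
  ext m
  rw [map_sub, coeff_expand, ← map_natCast (C (R := K)), coeff_C_mul, morrisSeries, negLogOneSub,
    coeff_mk, coeff_mk]
  split_ifs with h
  · rw [coeff_mk, Nat.cast_div h (Nat.cast_ne_zero.mpr hr), inv_div, div_eq_mul_inv, sub_self]
  · rw [div_eq_mul_inv, sub_zero]

theorem derivative_morrisSeries {r : ℕ} (hr : r ≠ 0) :
    d⁄dX K (morrisSeries K r) =
      (r : K⟦X⟧) * PowerSeries.mk 1 -
        (r : K⟦X⟧) * X ^ (r - 1) * expand r hr (PowerSeries.mk 1) := by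
  rw [morrisSeries_eq_sub_expand hr, map_sub, Derivation.leibniz, expand_apply,
    derivative_subst (.X_pow hr), ← expand_apply r hr, derivative_negLogOneSub, derivative_pow,
    derivative_X, Derivation.map_natCast, smul_eq_mul, smul_eq_mul, mul_zero, add_zero]
  ring

theorem derivative_one_sub_X_pow_mul_mk_one_pow {r : ℕ} (hr : r ≠ 0) :
    d⁄dX K ((1 - X ^ r) * (PowerSeries.mk 1) ^ r) =
      (1 - X ^ r) * (PowerSeries.mk 1) ^ r * d⁄dX K (morrisSeries K r) := by
  rw [derivative_morrisSeries hr]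
  set W : K⟦X⟧ := PowerSeries.mk 1
  have hW : W * (1 - X) = 1 := mk_one_mul_one_sub_eq_one K
  have hV : expand r hr W * (1 - X ^ r) = 1 := by
    simpa [expand_X] using congrArg (expand r hr) hW
  have hW' : d⁄dX K W = W ^ 2 := by
    have h := congrArg (d⁄dX K) hW
    rw [Derivation.leibniz, map_sub, derivative_X, derivative_one, smul_eq_mul, smul_eq_mul] at h
    linear_combination (-d⁄dX K W) * hW + W * h
  obtain ⟨s, rfl⟩ := Nat.exists_eq_add_one_of_ne_zero hr
  rw [Derivation.leibniz, map_sub, derivative_pow, derivative_pow, hW', derivative_one,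
    derivative_X, smul_eq_mul, smul_eq_mul, Nat.add_sub_cancel, Nat.cast_add_one]
  linear_combination ((s + 1 : K⟦X⟧) * X ^ s * W ^ (s + 1)) * hV

theorem exp_subst_morrisSeries {r : ℕ} (hr : r ≠ 0) :
    (exp K).subst (morrisSeries K r) = (1 - X ^ r) * (PowerSeries.mk 1) ^ r := by
  have hG := constantCoeff_morrisSeries (K := K) r
  have hclosed : constantCoeff ((1 - X ^ r) * (PowerSeries.mk 1 : K⟦X⟧) ^ r) = 1 := by
    simp [hr]
  refine eq_of_derivative_eq_mul (derivative_exp_subst (.of_constantCoeff_zero' hG))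
    (derivative_one_sub_X_pow_mul_mk_one_pow hr) (by simp [hclosed]) ?_
  rw [constantCoeff_subst_of_constantCoeff_eq_zero hG, constantCoeff_exp, hclosed]

end Morris

end PowerSeries

/-- **Morris's identity (generalizing Schur's).**
With `[t^m]G = r/m` if `r ∤ m` and `0` if `r ∣ m`, the coefficient of `tⁿ` in `exp(G)`
equals `C(n+r−1, r−1) − C(n−1, r−1)`. -/
theorem morris_identity (r n : ℕ) (hr : 1 ≤ r) (hn : 1 ≤ n) :
    PowerSeries.coeff (R := ℚ) n
        (substInto (PowerSeries.mk fun m => if r ∣ m then 0 else (r : ℚ) / (m : ℚ))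
          (PowerSeries.exp ℚ)) =
      ((n + r - 1).choose (r - 1) : ℚ) - ((n - 1).choose (r - 1) : ℚ) := by
  have hr₀ : r ≠ 0 := by omega
  change coeff n (substInto (morrisSeries ℚ r) (exp ℚ)) = _
  rw [substInto_eq_subst (constantCoeff_morrisSeries r)]
  exact (congrArg (coeff n) (exp_subst_morrisSeries hr₀)).trans
    (coeff_one_sub_X_pow_mul_mk_one_pow hr₀ (by omega))
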